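/- arXiv:1512.02940 — 2 statements merged into one kernel-verified Lean document; each statement's English description precedes it below -/
import Mathlib

section
/- Let n ≥ 2 and let v_0,…,v_n be affinely independent points in ℝ^n forming an n-simplex S all of whose facets are nonobtuse, and let G be any vertex Gramian of S. Then the unique solution x of G x = e (where e is the all-ones vector) has at most one negative entry, and for each j the unique solution y of G y = e_j (the j-th standard basis vector) has at most two positive entries. Equivalently, each column of G⁻¹ has at most two positive entries and G⁻¹ e has at most one negative entry. -/
/-!
Let `Q k` be the gradient of the `k`-th barycentric coordinate. Then `G⁻¹ = (⟪Q i, Q j⟫)` and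
`G⁻¹ e = (-⟪Q i, Q ℓ⟫)`, so both claims say that for every `j` at most one `i ≠ j` has
`⟪Q i, Q j⟫ > 0`. That the facet opposite `v m` is nonobtuse means that the components of the
`Q s` (`s ≠ m`) orthogonal to `Q m` pairwise make nonobtuse angles, i.e.
`⟪Q s, Q t⟫ ‖Q m‖² ≤ ⟪Q s, Q m⟫ ⟪Q t, Q m⟫`. If `⟪Q a, Q j⟫` and `⟪Q c, Q j⟫` were both positive,
this inequality for `m = a` and for `m = c` would give `‖Q a‖² ‖Q c‖² ≤ ⟪Q a, Q c⟫²`,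
contradicting the linear independence of `Q a` and `Q c`.
-/

open Matrix Finset
open scoped RealInnerProductSpace

noncomputable section

/-- The vertex Gramian of the simplex with vertices `v` associated with vertex `v ℓ`. -/
def vGram {n : ℕ} (v : Fin (n + 1) → EuclideanSpace ℝ (Fin n)) (ℓ : Fin (n + 1)) :
    Matrix {k : Fin (n + 1) // k ≠ ℓ} {k : Fin (n + 1) // k ≠ ℓ} ℝ :=
  Matrix.of fun i j => ⟪v i.1 - v ℓ, v j.1 - v ℓ⟫

/-- A Stieltjes matrix: symmetric positive definite with nonpositive off-diagonal entries. -/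
def IsStieltjes {ι : Type*} [Fintype ι] (M : Matrix ι ι ℝ) : Prop :=
  M.PosDef ∧ ∀ i j, i ≠ j → M i j ≤ 0

/-- Weakly diagonally dominant: `M e ≥ 0` entrywise for the all-ones vector `e`. -/
def IsWDD {ι : Type*} [Fintype ι] (M : Matrix ι ι ℝ) : Prop :=
  ∀ i, 0 ≤ ∑ j, M i j

/-- Pointwise weakly diagonally dominant: each diagonal entry is maximal in its row. -/
def PWDD {ι : Type*} (M : Matrix ι ι ℝ) : Prop :=
  ∀ i j, M i j ≤ M i i

/-- The orthogonal projection of `x` onto the affine span of `{v k : k ∈ s}`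
lies in the convex hull of `{v k : k ∈ s}`. -/
def ProjInHull {n : ℕ} (x : EuclideanSpace ℝ (Fin n))
    (v : Fin (n + 1) → EuclideanSpace ℝ (Fin n)) (s : Set (Fin (n + 1))) : Prop :=
  ∃ p ∈ convexHull ℝ (v '' s), ∀ a ∈ s, ∀ b ∈ s, ⟪x - p, v a - v b⟫ = 0

/-- All facets of the simplex are nonobtuse: each vertex `v i` projects, for each `j ≠ i`,
into the convex hull of the vertices other than `v i, v j`. -/
def FacetsNonobtuse {n : ℕ} (v : Fin (n + 1) → EuclideanSpace ℝ (Fin n)) : Prop :=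
  ∀ i j : Fin (n + 1), i ≠ j → ProjInHull (v i) v {k | k ≠ i ∧ k ≠ j}

/-- `q` is an inward normal to the facet opposite `v j`. -/
def IsInwardNormal {n : ℕ} (v : Fin (n + 1) → EuclideanSpace ℝ (Fin n)) (j : Fin (n + 1))
    (q : EuclideanSpace ℝ (Fin n)) : Prop :=
  q ≠ 0 ∧ (∀ a b : Fin (n + 1), a ≠ j → b ≠ j → ⟪q, v a - v b⟫ = 0) ∧
    ∀ k : Fin (n + 1), k ≠ j → 0 < ⟪q, v j - v k⟫

/-- The `j`-th column of `A` is a blocking column: no off-diagonal entry of column `j`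
is minimal in its row. -/
def IsBlockingCol {ι : Type*} (A : Matrix ι ι ℝ) (j : ι) : Prop :=
  ∀ i, i ≠ j → ∃ k, A i k < A i j

/-- `A` is nonblocking: every column has an off-diagonal entry minimal in its row. -/
def IsNonblocking {ι : Type*} (A : Matrix ι ι ℝ) : Prop :=
  ∀ j, ∃ i, i ≠ j ∧ ∀ k, A i j ≤ A i k

/-- A (symmetric nonnegative) ultrametric matrix. -/
def IsUltra {ι : Type*} (A : Matrix ι ι ℝ) : Prop :=
  (∀ i j, 0 ≤ A i j) ∧ (∀ i j, A i j ≤ A i i) ∧ ∀ i j k, min (A i k) (A k j) ≤ A i j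

/-- The principal submatrix of `A` with rows and columns restricted to `s`. -/
def subMat {ι : Type*} (A : Matrix ι ι ℝ) (s : Finset ι) :
    Matrix {x // x ∈ s} {x // x ∈ s} ℝ :=
  A.submatrix (fun i => i.1) (fun j => j.1)

/-- The principal submatrix of `A` obtained by deleting row and column `m`. -/
def delMat {ι : Type*} (A : Matrix ι ι ℝ) (m : ι) : Matrix {i // i ≠ m} {i // i ≠ m} ℝ :=
  A.submatrix (fun i => i.1) (fun j => j.1)

section Tetra

variable {V : Type*} [NormedAddCommGroup V] [InnerProductSpace ℝ V]

/-- The triangle with vertices `a, b, c` is nonobtuse. -/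
def NonobtuseTri (a b c : V) : Prop :=
  0 ≤ ⟪b - a, c - a⟫ ∧ 0 ≤ ⟪a - b, c - b⟫ ∧ 0 ≤ ⟪a - c, b - c⟫

/-- The sub-orthocentric set of the triangle `a b c`: the union over the vertices of the
closed segments from the vertex to the orthocenter. -/
def SubOrthoSet (a b c : V) : Set V :=
  {x | ∃ h, h ∈ affineSpan ℝ ({a, b, c} : Set V) ∧
    ⟪h - a, b - c⟫ = 0 ∧ ⟪h - b, a - c⟫ = 0 ∧
    (x ∈ segment ℝ a h ∨ x ∈ segment ℝ b h ∨ x ∈ segment ℝ c h)}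

/-- `p` is the orthogonal projection of `x` onto the affine span of `{a, b, c}`. -/
def IsOrthProjTri (x p a b c : V) : Prop :=
  p ∈ affineSpan ℝ ({a, b, c} : Set V) ∧ ⟪x - p, b - a⟫ = 0 ∧ ⟪x - p, c - a⟫ = 0

/-- A sub-orthocentric tetrahedron: all triangular faces are nonobtuse and each vertex
projects orthogonally into the sub-orthocentric set of its opposite face. -/
def IsSubOrthoTetra (w : Fin 4 → V) : Prop :=
  ∀ i : Fin 4,
    NonobtuseTri (w (i.succAbove 0)) (w (i.succAbove 1)) (w (i.succAbove 2)) ∧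
    ∃ p, IsOrthProjTri (w i) p (w (i.succAbove 0)) (w (i.succAbove 1)) (w (i.succAbove 2)) ∧
      p ∈ SubOrthoSet (w (i.succAbove 0)) (w (i.succAbove 1)) (w (i.succAbove 2))

end Tetra

section

variable {F : Type*} [NormedAddCommGroup F] [InnerProductSpace ℝ F]

lemma inner_mul_inner_self_lt_of_inner_eq {x y e f : F} (hxe : ⟪x, e⟫ = 1) (hye : ⟪y, e⟫ = 0)
    (hyf : ⟪y, f⟫ = 1) : ⟪x, y⟫ * ⟪x, y⟫ < ⟪x, x⟫ * ⟪y, y⟫ := by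
  refine (real_inner_mul_inner_self_le x y).lt_of_ne fun h => ?_
  have hnorm : |⟪x, y⟫| = ‖x‖ * ‖y‖ := by
    rw [← sq_eq_sq₀ (abs_nonneg _) (by positivity), sq_abs, mul_pow, ← real_inner_self_eq_norm_sq,
      ← real_inner_self_eq_norm_sq, sq, h]
  obtain hx | ⟨r, rfl⟩ := (norm_inner_eq_norm_tfae ℝ x y).out 0 2 |>.mp hnorm
  · simp [hx] at hxe
  · rw [real_inner_smul_left, hxe, mul_one] at hye
    simp [hye] at hyf

lemma inner_mul_inner_self_le_inner_mul_inner {x y z : F} {a b α β : ℝ} (ha : 0 < a) (hb : 0 < b)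
    (hx : ⟪a • x + α • z, z⟫ = 0)
    (hxy : ⟪a • x + α • z, b • y + β • z⟫ ≤ 0) : ⟪x, y⟫ * ⟪z, z⟫ ≤ ⟪x, z⟫ * ⟪y, z⟫ := by
  simp only [inner_add_left, inner_add_right, real_inner_smul_left, real_inner_smul_right]
    at hx hxy
  rw [real_inner_comm y z] at hxy
  have key : a * b * (⟪x, y⟫ * ⟪z, z⟫ - ⟪x, z⟫ * ⟪y, z⟫) =
      ⟪z, z⟫ * (a * b * ⟪x, y⟫ + a * β * ⟪x, z⟫ + α * b * ⟪y, z⟫ + α * β * ⟪z, z⟫) := by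
    linear_combination (-(b * ⟪y, z⟫ + β * ⟪z, z⟫)) * hx
  have hkey : a * b * (⟪x, y⟫ * ⟪z, z⟫ - ⟪x, z⟫ * ⟪y, z⟫) ≤ 0 :=
    key ▸ mul_nonpos_of_nonneg_of_nonpos real_inner_self_nonneg (by linarith)
  exact sub_nonpos.mp (nonpos_of_mul_nonpos_right hkey (mul_pos ha hb))

end

variable {ι E : Type*} [NormedAddCommGroup E] [InnerProductSpace ℝ E]

namespace AffineBasis

variable (B : AffineBasis ι ℝ E)

lemma coord_nonneg_of_mem_convexHull {s : Set ι} {p : E} (hp : p ∈ convexHull ℝ (B '' s))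
    (k : ι) : 0 ≤ B.coord k p := by
  classical
  refine convexHull_min ?_ ((convex_Ici 0).affine_preimage (B.coord k)) hp
  rintro _ ⟨i, -, rfl⟩
  simp only [Set.mem_preimage, Set.mem_Ici, coord_apply]
  split_ifs <;> norm_num

lemma coord_eq_zero_of_mem_convexHull {s : Set ι} {p : E} (hp : p ∈ convexHull ℝ (B '' s))
    {k : ι} (hk : k ∉ s) : B.coord k p = 0 := by
  refine convexHull_min ?_ ((convex_singleton 0).affine_preimage (B.coord k)) hp
  rintro _ ⟨i, hi, rfl⟩
  simp [show k ≠ i from fun h => hk (h ▸ hi)]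

lemma ext_inner_vertex_sub {w w' : E} (r : ι) (h : ∀ i, ⟪B i - B r, w⟫ = ⟪B i - B r, w'⟫) :
    w = w' :=
  InnerProductSpace.ext_inner_left_basis (B.basisOf r) fun i => by simpa [basisOf_apply] using h i

/-- `ProjInHull` for the vertex `B s` and the face without `B s` and `B m`, for an affine basis of
an arbitrary real inner product space. -/
def ProjInFace (s m : ι) : Prop :=
  ∃ p ∈ convexHull ℝ (B '' {k | k ≠ s ∧ k ≠ m}),
    ∀ a ∈ {k | k ≠ s ∧ k ≠ m}, ∀ b ∈ {k | k ≠ s ∧ k ≠ m}, ⟪B s - p, B a - B b⟫ = 0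

variable [FiniteDimensional ℝ E]

/-- The gradient of the barycentric coordinate `B.coord k`: the inward normal of the facet
opposite `B k`, of length the reciprocal of the corresponding height. -/
def baryGrad (k : ι) : E :=
  (InnerProductSpace.toDual ℝ E).symm (B.coord k).linear.toContinuousLinearMap

lemma inner_baryGrad_sub (k : ι) (x y : E) :
    ⟪B.baryGrad k, x - y⟫ = B.coord k x - B.coord k y := by
  rw [baryGrad, InnerProductSpace.toDual_symm_apply, LinearMap.coe_toContinuousLinearMap',
    ← vsub_eq_sub, AffineMap.linearMap_vsub, vsub_eq_sub]

variable [DecidableEq ι]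

@[simp]
lemma inner_baryGrad_vertex_sub (k i j : ι) :
    ⟪B.baryGrad k, B i - B j⟫ = (if k = i then 1 else 0) - (if k = j then 1 else 0) := by
  rw [inner_baryGrad_sub, coord_apply, coord_apply]

variable [Fintype ι]

lemma eq_sum_inner_smul_baryGrad (w : E) (r : ι) :
    w = ∑ k, ⟪w, B k - B r⟫ • B.baryGrad k := by
  refine B.ext_inner_vertex_sub r fun i => ?_
  simp only [inner_sum, real_inner_smul_right]
  simp_rw [real_inner_comm (B.baryGrad _), inner_baryGrad_vertex_sub, mul_sub, mul_ite,
    mul_one, mul_zero, Finset.sum_sub_distrib]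
  simp [real_inner_comm]

lemma exists_vertex_sub_eq_smul_baryGrad_add_smul {s m t : ι} (hsm : s ≠ m) (hts : t ≠ s)
    (htm : t ≠ m) {p : E} (hp : p ∈ convexHull ℝ (B '' {k | k ≠ s ∧ k ≠ m}))
    (hperp : ∀ a ∈ {k | k ≠ s ∧ k ≠ m}, ∀ b ∈ {k | k ≠ s ∧ k ≠ m}, ⟪B s - p, B a - B b⟫ = 0) :
    ∃ a α : ℝ, 0 < a ∧ B s - p = a • B.baryGrad s + α • B.baryGrad m := by
  -- `u` is orthogonal to the face without `B s` and `B m`, so its expansion only involves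
  -- `baryGrad s` and `baryGrad m`; pairing with `u` identifies the first coefficient as `‖u‖²`.
  set u := B s - p
  have hu := B.eq_sum_inner_smul_baryGrad u t
  rw [Fintype.sum_eq_add s m hsm fun k hk => by rw [hperp k hk t ⟨hts, htm⟩, zero_smul]] at hu
  have hus : ⟪B.baryGrad s, u⟫ = 1 := by
    simp [u, inner_baryGrad_sub, B.coord_eq_zero_of_mem_convexHull hp (k := s) (by simp)]
  have hum : ⟪B.baryGrad m, u⟫ = 0 := by
    simp [u, inner_baryGrad_sub, B.coord_eq_zero_of_mem_convexHull hp (k := m) (by simp), hsm.symm]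
  refine ⟨⟪u, B s - B t⟫, ⟪u, B m - B t⟫, ?_, hu⟩
  have huu : ⟪u, u⟫ = ⟪u, B s - B t⟫ := by
    nth_rw 2 [hu]
    rw [inner_add_right, real_inner_smul_right, real_inner_smul_right,
      real_inner_comm (B.baryGrad s), real_inner_comm (B.baryGrad m), hus, hum]
    ring
  exact huu ▸ real_inner_self_pos.mpr fun h => by simp [h] at hus

variable {B} in
/-- The components of `baryGrad s` and `baryGrad t` orthogonal to `baryGrad m` are positive
multiples of the altitudes `B s - p` of the facet opposite `B m`, whose feet `p` lie in the
facet, so they make a nonobtuse angle. -/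
lemma inner_baryGrad_mul_inner_self_le {s t m : ι} (hst : s ≠ t) (hsm : s ≠ m) (htm : t ≠ m)
    (hs : B.ProjInFace s m) (ht : B.ProjInFace t m) :
    ⟪B.baryGrad s, B.baryGrad t⟫ * ⟪B.baryGrad m, B.baryGrad m⟫ ≤
      ⟪B.baryGrad s, B.baryGrad m⟫ * ⟪B.baryGrad t, B.baryGrad m⟫ := by
  obtain ⟨ps, hps, hperps⟩ := hs
  obtain ⟨pt, hpt, hperpt⟩ := ht
  obtain ⟨a, α, ha, hus⟩ :=
    B.exists_vertex_sub_eq_smul_baryGrad_add_smul hsm hst.symm htm hps hperps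
  obtain ⟨b, β, hb, hut⟩ := B.exists_vertex_sub_eq_smul_baryGrad_add_smul htm hst hsm hpt hperpt
  refine inner_mul_inner_self_le_inner_mul_inner ha hb (α := α) (β := β) ?_ ?_
  · rw [← hus, real_inner_comm, inner_baryGrad_sub,
      B.coord_eq_zero_of_mem_convexHull hps (k := m) (by simp)]
    simp [hsm.symm]
  · rw [← hut, inner_add_left, real_inner_smul_left, real_inner_smul_left,
      inner_baryGrad_sub, inner_baryGrad_sub,
      B.coord_eq_zero_of_mem_convexHull hpt (k := m) (by simp)]
    simp only [coord_apply, if_neg hst, if_neg htm.symm]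
    nlinarith [B.coord_nonneg_of_mem_convexHull hpt s]

lemma subsingleton_setOf_inner_baryGrad_pos (hB : ∀ s m, s ≠ m → B.ProjInFace s m) (j : ι) :
    {i | i ≠ j ∧ 0 < ⟪B.baryGrad i, B.baryGrad j⟫}.Subsingleton := by
  rintro a ⟨haj, ha⟩ c ⟨hcj, hc⟩
  by_contra hac
  -- The facet inequalities at `a` and at `c` together would force equality in Cauchy–Schwarz.
  have hCS : ⟪B.baryGrad a, B.baryGrad c⟫ * ⟪B.baryGrad a, B.baryGrad c⟫ <
      ⟪B.baryGrad a, B.baryGrad a⟫ * ⟪B.baryGrad c, B.baryGrad c⟫ :=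
    inner_mul_inner_self_lt_of_inner_eq (e := B a - B j) (f := B c - B j)
      (by simp [haj]) (by simp [Ne.symm hac, hcj]) (by simp [hcj])
  have h₁ := inner_baryGrad_mul_inner_self_le (Ne.symm hcj) (Ne.symm haj) (Ne.symm hac)
    (hB j a (Ne.symm haj)) (hB c a (Ne.symm hac))
  have h₂ := inner_baryGrad_mul_inner_self_le (Ne.symm haj) (Ne.symm hcj) hac
    (hB j c (Ne.symm hcj)) (hB a c hac)
  simp only [real_inner_comm _ (B.baryGrad j)] at h₁ h₂
  rw [real_inner_comm (B.baryGrad a) (B.baryGrad c)] at h₁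
  have hX : 0 ≤ ⟪B.baryGrad a, B.baryGrad c⟫ := by
    nlinarith [real_inner_self_nonneg (x := B.baryGrad a)]
  have hprod := mul_le_mul h₁ h₂ (mul_nonneg ha.le real_inner_self_nonneg) (mul_nonneg ha.le hX)
  nlinarith [mul_pos ha hc]

lemma eq_inner_baryGrad_of_gram_mulVec {r : ι} {y : {i // i ≠ r} → ℝ} {z : E}
    (h : gram ℝ (fun i : {i // i ≠ r} => B i - B r) *ᵥ y =
      fun i : {i // i ≠ r} => ⟪B i - B r, z⟫)
    (i : {i // i ≠ r}) : y i = ⟪B.baryGrad i, z⟫ := by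
  have hz : z = ∑ k, y k • (B k - B r) := by
    refine B.ext_inner_vertex_sub r fun i => ?_
    by_cases hi : i = r
    · simp [hi]
    · rw [← congrFun h ⟨i, hi⟩]
      simp [mulVec, dotProduct, gram_apply, inner_sum, real_inner_smul_right, mul_comm]
  rw [hz, inner_sum]
  simp [real_inner_smul_right, i.2, Subtype.coe_inj]

lemma ncard_setOf_neg_le_one (hB : ∀ s m, s ≠ m → B.ProjInFace s m) {r : ι}
    {x : {i // i ≠ r} → ℝ} (hx : gram ℝ (fun i : {i // i ≠ r} => B i - B r) *ᵥ x = 1) :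
    {i | x i < 0}.ncard ≤ 1 := by
  have hxi (i : {i // i ≠ r}) : x i = -⟪B.baryGrad i, B.baryGrad r⟫ := by
    refine (B.eq_inner_baryGrad_of_gram_mulVec (hx.trans ?_) i).trans (inner_neg_right ..)
    ext k
    simp [real_inner_comm (B.baryGrad r), Ne.symm k.2]
  refine Set.ncard_le_one_iff_subsingleton.mpr <|
    ((B.subsingleton_setOf_inner_baryGrad_pos hB r).preimage Subtype.val_injective).anti ?_
  intro i hi
  exact ⟨i.2, by simpa [hxi] using hi⟩

lemma ncard_setOf_pos_le_two (hB : ∀ s m, s ≠ m → B.ProjInFace s m) {r : ι}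
    (j : {i // i ≠ r}) {y : {i // i ≠ r} → ℝ}
    (hy : gram ℝ (fun i : {i // i ≠ r} => B i - B r) *ᵥ y = Pi.single j 1) :
    {i | 0 < y i}.ncard ≤ 2 := by
  have hyi (i : {i // i ≠ r}) : y i = ⟪B.baryGrad i, B.baryGrad j⟫ := by
    refine B.eq_inner_baryGrad_of_gram_mulVec (hy.trans ?_) i
    ext k
    simp [real_inner_comm (B.baryGrad j), Pi.single_apply, j.2, Subtype.coe_inj, eq_comm]
  set T : Set {i // i ≠ r} :=
    Subtype.val ⁻¹' {i | i ≠ (j : ι) ∧ 0 < ⟪B.baryGrad i, B.baryGrad j⟫}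
  have hT : T.ncard ≤ 1 := Set.ncard_le_one_iff_subsingleton.mpr <|
    (B.subsingleton_setOf_inner_baryGrad_pos hB j).preimage Subtype.val_injective
  have hsub : {i | 0 < y i} ⊆ insert j T := by
    intro i hi
    by_cases hij : i = j
    · exact Or.inl hij
    · exact Or.inr ⟨fun h => hij (Subtype.ext h), by simpa [hyi] using hi⟩
  calc {i | 0 < y i}.ncard ≤ (insert j T).ncard := Set.ncard_le_ncard hsub
    _ ≤ T.ncard + 1 := Set.ncard_insert_le j T
    _ ≤ 2 := by omega

end AffineBasis

theorem stmt5_general (n : ℕ) (v : Fin (n + 1) → EuclideanSpace ℝ (Fin n))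
    (hv : AffineIndependent ℝ v) (hfac : FacetsNonobtuse v) (ℓ : Fin (n + 1)) :
    (∀ x : {k : Fin (n + 1) // k ≠ ℓ} → ℝ, vGram v ℓ *ᵥ x = 1 →
        {i | x i < 0}.ncard ≤ 1) ∧
    (∀ (j : {k : Fin (n + 1) // k ≠ ℓ}) (y : {k : Fin (n + 1) // k ≠ ℓ} → ℝ),
        vGram v ℓ *ᵥ y = Pi.single j 1 → {i | 0 < y i}.ncard ≤ 2) := by
  let B : AffineBasis (Fin (n + 1)) ℝ (EuclideanSpace ℝ (Fin n)) :=
    ⟨v, hv, hv.affineSpan_eq_top_iff_card_eq_finrank_add_one.mpr (by simp)⟩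
  have hB : ∀ s m, s ≠ m → B.ProjInFace s m := hfac
  exact ⟨fun x hx => B.ncard_setOf_neg_le_one hB hx, fun j y hy => B.ncard_setOf_pos_le_two hB j hy⟩

theorem stmt5 (n : ℕ) (hn : 2 ≤ n) (v : Fin (n + 1) → EuclideanSpace ℝ (Fin n))
    (hv : AffineIndependent ℝ v) (hfac : FacetsNonobtuse v) (ℓ : Fin (n + 1)) :
    (∀ x : {k : Fin (n + 1) // k ≠ ℓ} → ℝ, vGram v ℓ *ᵥ x = 1 →
        {i | x i < 0}.ncard ≤ 1) ∧
    (∀ (j : {k : Fin (n + 1) // k ≠ ℓ}) (y : {k : Fin (n + 1) // k ≠ ℓ} → ℝ),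
        vGram v ℓ *ᵥ y = Pi.single j 1 → {i | 0 < y i}.ncard ≤ 2) :=
  stmt5_general n v hv hfac ℓ
end
end

section
/- Let n ≥ 2 and let v_0,…,v_n be affinely independent points in ℝ^n forming an n-simplex S all of whose facets are nonobtuse. Then: (i) if G is a vertex Gramian of S that is nonblocking, then G x = e has an entrywise nonnegative solution x (where e is the all-ones vector); and (ii) if every vertex Gramian of S is nonblocking, then the inverse of every vertex Gramian of S is a weakly diagonally dominant Stieltjes matrix (i.e., S is a nonobtuse simplex). -/
open Matrix Finset
open scoped RealInnerProductSpace

noncomputable section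

/-!
(i) Let `x = G⁻¹ e` for `G = vGram v ℓ` and `c = ∑ₖ xₖ (vₖ - v_ℓ)`, so `⟪v_a - v_ℓ, c⟫ = 1` for
every `a ≠ ℓ`. If `x_m < 0`, let `z` be the foot of the perpendicular from `v_m` to the face
without `v_m, v_ℓ`; it lies in that face by nonobtuseness, and `r = v_m - z ≠ 0`. All
`⟪v_k - v_ℓ, r⟫` with `k ≠ m` equal one number `D`, while `⟪v_m - v_ℓ, r⟫ = D + ‖r‖²`. As `c` is
constant on the face, `0 = ⟪c, r⟫ = (∑ x) D + x_m ‖r‖²`, and `∑ x = eᵀ G⁻¹ e > 0` forces `D > 0`.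
But if row `i` has its minimum in column `m`, then `z`, a convex combination of vertices `v_a`
with `G i a ≥ G i m`, gives `⟪v_i - v_ℓ, r⟫ ≤ 0`.

(ii) For distinct `i, j ≠ ℓ`, pairing the dual vector `∑ₖ (G_ℓ⁻¹)ₖᵢ (vₖ - v_ℓ)` with the vector `c`
built from `G_j` gives `(G_ℓ⁻¹)ⱼᵢ = -(G_j⁻¹ e)ᵢ ≤ 0`; the row sums of `G_ℓ⁻¹` are the entries of
`G_ℓ⁻¹ e ≥ 0`.
-/

section ConvexHull

variable {E : Type*} [NormedAddCommGroup E] [InnerProductSpace ℝ E] {t : Set E} {u z : E} {α : ℝ}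

theorem le_inner_of_mem_convexHull (hz : z ∈ convexHull ℝ t) (h : ∀ y ∈ t, α ≤ ⟪u, y⟫) :
    α ≤ ⟪u, z⟫ :=
  convexHull_min h (convex_halfSpace_ge (innerₛₗ ℝ u).isLinear α) hz

theorem inner_eq_of_mem_convexHull (hz : z ∈ convexHull ℝ t) (h : ∀ y ∈ t, ⟪u, y⟫ = α) :
    ⟪u, z⟫ = α :=
  convexHull_min h (convex_hyperplane (innerₛₗ ℝ u).isLinear α) hz

theorem AffineIndependent.apply_ne_of_mem_convexHull_image {ι : Type*} {p : ι → E}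
    (hp : AffineIndependent ℝ p) {s : Set ι} {m : ι} (hm : m ∉ s)
    (hz : z ∈ convexHull ℝ (p '' s)) : p m ≠ z := by
  rintro rfl
  refine hp.notMem_affineSpan_sdiff m s (convexHull_subset_affineSpan _ ?_)
  rwa [Set.sdiff_singleton_eq_self hm]

end ConvexHull

section Gram

variable {ι E : Type*} [Fintype ι] [NormedAddCommGroup E] [InnerProductSpace ℝ E]

theorem inner_sum_smul_eq_gram_mulVec (e : ι → E) (x : ι → ℝ) (a : ι) :
    ⟪e a, ∑ k, x k • e k⟫ = (gram ℝ e *ᵥ x) a := by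
  simp [inner_sum, real_inner_smul_right, mulVec, dotProduct, gram_apply, mul_comm]

theorem inner_sum_gram_inv_smul [DecidableEq ι] {e : ι → E} (he : LinearIndependent ℝ e)
    (i a : ι) : ⟪e a, ∑ k, (gram ℝ e)⁻¹ k i • e k⟫ = (1 : Matrix ι ι ℝ) a i := by
  rw [inner_sum_smul_eq_gram_mulVec,
    ← mul_nonsing_inv _ (det_gram_ne_zero_iff_linearIndependent.mpr he).isUnit]
  rfl

end Gram

section Simplex

variable {n : ℕ} {v : Fin (n + 1) → EuclideanSpace ℝ (Fin n)} {ℓ : Fin (n + 1)}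

theorem vGram_eq_gram (v : Fin (n + 1) → EuclideanSpace ℝ (Fin n)) (ℓ : Fin (n + 1)) :
    vGram v ℓ = gram ℝ fun i : {k // k ≠ ℓ} => v i - v ℓ :=
  rfl

theorem linearIndependent_vGram_edges (hv : AffineIndependent ℝ v) (ℓ : Fin (n + 1)) :
    LinearIndependent ℝ fun i : {k // k ≠ ℓ} => v i - v ℓ :=
  (affineIndependent_iff_linearIndependent_vsub ℝ v ℓ).mp hv

theorem posDef_vGram (hv : AffineIndependent ℝ v) : (vGram v ℓ).PosDef :=
  posDef_gram_of_linearIndependent (linearIndependent_vGram_edges hv ℓ)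

theorem isUnit_det_vGram (hv : AffineIndependent ℝ v) : IsUnit (vGram v ℓ).det :=
  (posDef_vGram hv).det_pos.ne'.isUnit

theorem inner_sub_sum_smul_of_vGram_mulVec_eq_one {x : {k // k ≠ ℓ} → ℝ}
    (hx : vGram v ℓ *ᵥ x = 1) (a : Fin (n + 1)) :
    ⟪v a - v ℓ, ∑ k, x k • (v k - v ℓ)⟫ = if a = ℓ then 0 else 1 := by
  split_ifs with ha
  · simp [ha]
  · rw [inner_sum_smul_eq_gram_mulVec (fun k : {k // k ≠ ℓ} => v k - v ℓ) x ⟨a, ha⟩,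
      ← vGram_eq_gram, hx, Pi.one_apply]

theorem inner_edge_sub_foot {m : Fin (n + 1)} {z : EuclideanSpace ℝ (Fin n)}
    (hz : z ∈ convexHull ℝ (v '' {k | k ≠ m ∧ k ≠ ℓ}))
    (hperp : ∀ a ∈ {k | k ≠ m ∧ k ≠ ℓ}, ∀ b ∈ {k | k ≠ m ∧ k ≠ ℓ}, ⟪v m - z, v a - v b⟫ = 0)
    (k : Fin (n + 1)) (hk : k ≠ ℓ) :
    ⟪v k - v ℓ, v m - z⟫ = ⟪z - v ℓ, v m - z⟫ + if k = m then ‖v m - z‖ ^ 2 else 0 := by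
  split_ifs with hkm
  · subst hkm
    rw [← real_inner_self_eq_norm_sq, ← inner_add_left]
    congr 1
    abel
  · have hzk : ⟪v m - z, z⟫ = ⟪v m - z, v k⟫ := by
      refine inner_eq_of_mem_convexHull hz ?_
      rintro _ ⟨a, ha, rfl⟩
      rw [← sub_eq_zero, ← inner_sub_right]
      exact hperp a ha k ⟨hkm, hk⟩
    rw [add_zero, real_inner_comm, real_inner_comm (v m - z), inner_sub_right, inner_sub_right,
      hzk]

theorem sum_mul_add_mul_norm_sq_eq_zero {x : {k // k ≠ ℓ} → ℝ} (hx : vGram v ℓ *ᵥ x = 1)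
    {m : {k // k ≠ ℓ}} {z : EuclideanSpace ℝ (Fin n)}
    (hz : z ∈ convexHull ℝ (v '' {k | k ≠ m.1 ∧ k ≠ ℓ}))
    (hperp : ∀ a ∈ {k | k ≠ m.1 ∧ k ≠ ℓ}, ∀ b ∈ {k | k ≠ m.1 ∧ k ≠ ℓ}, ⟪v m - z, v a - v b⟫ = 0) :
    (∑ k, x k) * ⟪z - v ℓ, v m - z⟫ + x m * ‖v m - z‖ ^ 2 = 0 := by
  have hc := inner_sub_sum_smul_of_vGram_mulVec_eq_one hx
  set c := ∑ k, x k • (v k - v ℓ)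
  have hzm : ⟪c, z⟫ = ⟪c, v m⟫ := by
    refine inner_eq_of_mem_convexHull hz ?_
    rintro _ ⟨a, ⟨-, haℓ⟩, rfl⟩
    have ha := hc a
    have hm := hc m
    rw [if_neg haℓ, inner_sub_left] at ha
    rw [if_neg m.2, inner_sub_left] at hm
    rw [real_inner_comm (v a), real_inner_comm (v m)]
    linarith
  have hcr : ⟪c, v m - z⟫ = 0 := by rw [inner_sub_right, hzm, sub_self]
  rw [← hcr, sum_inner]
  simp only [real_inner_smul_left, fun k : {k // k ≠ ℓ} => inner_edge_sub_foot hz hperp k k.2,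
    mul_add, Subtype.coe_inj, mul_ite, mul_zero, sum_add_distrib, ← sum_mul, sum_ite_eq',
    mem_univ, if_true]

theorem nonneg_of_vGram_mulVec_eq_one (hv : AffineIndependent ℝ v) (hfac : FacetsNonobtuse v)
    (hnb : IsNonblocking (vGram v ℓ)) {x : {k // k ≠ ℓ} → ℝ} (hx : vGram v ℓ *ᵥ x = 1)
    (m : {k // k ≠ ℓ}) : 0 ≤ x m := by
  by_contra! hxm
  obtain ⟨z, hz, hperp⟩ := hfac m ℓ m.2
  have hsum := sum_mul_add_mul_norm_sq_eq_zero hx hz hperp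
  have hedge := inner_edge_sub_foot hz hperp
  set r := v m - z
  set D := ⟪z - v ℓ, r⟫
  have hr : 0 < ‖r‖ ^ 2 := by
    have : r ≠ 0 := sub_ne_zero.mpr (hv.apply_ne_of_mem_convexHull_image (by simp) hz)
    positivity
  have hpos : 0 < ∑ k, x k := by
    have h := (posDef_vGram hv).dotProduct_mulVec_pos (x := x) (fun h => by simp [h] at hxm)
    simpa [hx, dotProduct] using h
  have hD : 0 < D := by nlinarith
  obtain ⟨i, him, hmin⟩ := hnb m
  have hir : ⟪v i - v ℓ, r⟫ ≤ 0 := by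
    have h : ⟪v i - v ℓ, v m⟫ ≤ ⟪v i - v ℓ, z⟫ := by
      refine le_inner_of_mem_convexHull hz ?_
      rintro _ ⟨a, ⟨-, haℓ⟩, rfl⟩
      have h := hmin ⟨a, haℓ⟩
      simp only [vGram, of_apply, inner_sub_right] at h
      linarith
    rw [inner_sub_right]
    linarith
  rw [hedge i i.2, if_neg (Subtype.coe_ne_coe.mpr him)] at hir
  linarith

theorem vGram_inv_apply_eq_neg (hv : AffineIndependent ℝ v) {i j : {k // k ≠ ℓ}} (hij : i ≠ j)
    {x : {k // k ≠ j.1} → ℝ} (hx : vGram v j *ᵥ x = 1) :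
    (vGram v ℓ)⁻¹ j i = -x ⟨i, Subtype.coe_ne_coe.mpr hij⟩ := by
  have hjℓ : (j : Fin (n + 1)) ≠ ℓ := j.2
  set i' : {k // k ≠ j.1} := ⟨i, Subtype.coe_ne_coe.mpr hij⟩
  set q := ∑ k, (vGram v ℓ)⁻¹ k i • (v k - v ℓ)
  set c := ∑ k, x k • (v k - v j)
  have hq : ∀ a, ⟪v a - v ℓ, q⟫ = if a = i then 1 else 0 := by
    intro a
    by_cases haℓ : a = ℓ
    · simp [haℓ, Ne.symm i.2]
    · have h := inner_sum_gram_inv_smul (linearIndependent_vGram_edges hv ℓ) i ⟨a, haℓ⟩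
      simp only [one_apply, Subtype.ext_iff] at h
      exact h
  have hqj : ∀ a, ⟪v a - v j, q⟫ = if a = i' then 1 else 0 := by
    intro a
    rw [← sub_sub_sub_cancel_right _ _ (v ℓ), inner_sub_left, hq, hq,
      if_neg (Subtype.coe_ne_coe.mpr hij.symm), sub_zero]
  have hcℓ : ∀ a, ⟪v a - v ℓ, c⟫ = if a = j then -1 else 0 := by
    intro a
    rw [← sub_sub_sub_cancel_right _ _ (v j), inner_sub_left,
      inner_sub_sum_smul_of_vGram_mulVec_eq_one hx, inner_sub_sum_smul_of_vGram_mulVec_eq_one hx,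
      if_neg hjℓ.symm]
    split_ifs <;> norm_num
  have hqc : ⟪q, c⟫ = -(vGram v ℓ)⁻¹ j i := by
    simp only [q, sum_inner, real_inner_smul_left, hcℓ, Subtype.coe_inj, mul_ite, mul_neg,
      mul_one, mul_zero, sum_ite_eq', mem_univ, if_true]
  have hcq : ⟪c, q⟫ = x i' := by
    simp only [c, sum_inner, real_inner_smul_left, hqj, Subtype.coe_inj, mul_ite, mul_one,
      mul_zero, sum_ite_eq', mem_univ, if_true]
  rw [real_inner_comm, hcq] at hqc
  linarith

end Simplex

theorem stmt9_general (n : ℕ) (v : Fin (n + 1) → EuclideanSpace ℝ (Fin n))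
    (hv : AffineIndependent ℝ v) (hfac : FacetsNonobtuse v) :
    (∀ ℓ, IsNonblocking (vGram v ℓ) →
        ∃ x : {k : Fin (n + 1) // k ≠ ℓ} → ℝ, (∀ i, 0 ≤ x i) ∧ vGram v ℓ *ᵥ x = 1) ∧
    ((∀ ℓ, IsNonblocking (vGram v ℓ)) →
        ∀ ℓ, IsStieltjes (vGram v ℓ)⁻¹ ∧ IsWDD (vGram v ℓ)⁻¹) := by
  have hsol : ∀ ℓ, vGram v ℓ *ᵥ ((vGram v ℓ)⁻¹ *ᵥ 1) = 1 := fun ℓ => by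
    rw [mulVec_mulVec, mul_nonsing_inv _ (isUnit_det_vGram hv), one_mulVec]
  have hnonneg := fun ℓ (hnb : IsNonblocking (vGram v ℓ)) =>
    nonneg_of_vGram_mulVec_eq_one hv hfac hnb (hsol ℓ)
  refine ⟨fun ℓ hnb => ⟨_, hnonneg ℓ hnb, hsol ℓ⟩, fun hnb ℓ => ⟨⟨(posDef_vGram hv).inv, ?_⟩, ?_⟩⟩
  · intro i j hij
    rw [vGram_inv_apply_eq_neg hv hij.symm (hsol i), neg_nonpos]
    exact hnonneg i (hnb i) _
  · intro i
    simpa [mulVec, dotProduct] using hnonneg ℓ (hnb ℓ) i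

theorem stmt9 (n : ℕ) (hn : 2 ≤ n) (v : Fin (n + 1) → EuclideanSpace ℝ (Fin n))
    (hv : AffineIndependent ℝ v) (hfac : FacetsNonobtuse v) :
    (∀ ℓ, IsNonblocking (vGram v ℓ) →
        ∃ x : {k : Fin (n + 1) // k ≠ ℓ} → ℝ, (∀ i, 0 ≤ x i) ∧ vGram v ℓ *ᵥ x = 1) ∧
    ((∀ ℓ, IsNonblocking (vGram v ℓ)) →
        ∀ ℓ, IsStieltjes (vGram v ℓ)⁻¹ ∧ IsWDD (vGram v ℓ)⁻¹) :=
  stmt9_general n v hv hfac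
end
end
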